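/- Let L be an FDD-lattice. Then the map η_L : L → CO(pt(L)) defined by η_L(x) = {p ∈ pt(L) : p(x) = 1} is an order isomorphism (in particular a lattice isomorphism) from L onto the lattice CO(pt(L)) of compact-open subsets of pt(L) ordered by inclusion: η_L is well-defined, order-preserving, injective, and surjective. -/

import Mathlib

section Domains

variable (P : Type*) [PartialOrder P]

/-- A dcpo: every nonempty directed subset has a least upper bound. -/
def DirectedComplete : Prop :=
  ∀ D : Set P, D.Nonempty → DirectedOn (· ≤ ·) D → ∃ s, IsLUB D s

variable {P}

/-- A compact (finite) element of a poset. -/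
def IsCompactElt (k : P) : Prop :=
  ∀ D : Set P, D.Nonempty → DirectedOn (· ≤ ·) D → ∀ s : P, IsLUB D s → k ≤ s →
    ∃ d ∈ D, k ≤ d

/-- A Scott-open subset: an upper set inaccessible by directed suprema. -/
def ScottOpen (U : Set P) : Prop :=
  IsUpperSet U ∧ ∀ D : Set P, D.Nonempty → DirectedOn (· ≤ ·) D → ∀ s : P, IsLUB D s →
    s ∈ U → (D ∩ U).Nonempty

/-- Compactness of a set with respect to covers by Scott-open sets. -/
def ScottCompactSet (K : Set P) : Prop :=
  ∀ C : Set (Set P), (∀ V ∈ C, ScottOpen V) → K ⊆ ⋃₀ C →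
    ∃ F : Finset (Set P), ↑F ⊆ C ∧ K ⊆ ⋃₀ (F : Set (Set P))

variable (P)

/-- The collection of compact-open subsets (w.r.t. the Scott topology). -/
def CO : Set (Set P) := {U | ScottOpen U ∧ ScottCompactSet U}

/-- An algebraic domain: a dcpo in which, for every `x`, the set of compact elements
below `x` is a (nonempty) directed set with least upper bound `x`. -/
def IsAlgebraicDomain : Prop :=
  DirectedComplete P ∧
  ∀ x : P,
    (Set.Iic x ∩ {k | IsCompactElt k}).Nonempty ∧
    DirectedOn (· ≤ ·) (Set.Iic x ∩ {k | IsCompactElt k}) ∧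
    IsLUB (Set.Iic x ∩ {k | IsCompactElt k}) x

/-- Every principal ideal `↓x` is a complete lattice in the induced order
(equivalently: every subset of `↓x` has a least upper bound inside `↓x`). -/
def PrincipalIdealsComplete : Prop :=
  ∀ x : P, ∀ S : Set P, S ⊆ Set.Iic x →
    ∃ s, s ≤ x ∧ (∀ a ∈ S, a ≤ s) ∧ ∀ u, u ≤ x → (∀ a ∈ S, a ≤ u) → s ≤ u

/-- An algebraic L-domain. -/
def IsAlgebraicLDomain : Prop := IsAlgebraicDomain P ∧ PrincipalIdealsComplete P

/-- The Lawson topology: generated by the Scott-open sets together with complements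
of principal filters. -/
def lawsonTopology : TopologicalSpace P :=
  TopologicalSpace.generateFrom ({U | ScottOpen U} ∪ {U | ∃ x : P, U = (Set.Ici x)ᶜ})

/-- Lawson compactness: compactness in the Lawson topology. -/
def LawsonCompact : Prop := @CompactSpace P (lawsonTopology P)

end Domains

section FDD

variable {L : Type*} [Lattice L] [BoundedOrder L]

/-- A nonzero co-prime element. -/
def CoprimeElt (a : L) : Prop :=
  a ≠ ⊥ ∧ ∀ x y : L, a ≤ x ⊔ y → a ≤ x ∨ a ≤ y

/-- A finitely disjunctive distributive lattice (FDD-lattice): a bounded distributive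
lattice in which (1) every element is a finite join of nonzero co-primes, and
(2) the meet of two nonzero co-primes is a finite join of pairwise disjoint
nonzero co-primes. -/
def IsFDD (L : Type*) [DistribLattice L] [BoundedOrder L] : Prop :=
  (∀ x : L, ∃ F : Finset L, (∀ a ∈ F, CoprimeElt a) ∧ x = F.sup id) ∧
  (∀ a b : L, CoprimeElt a → CoprimeElt b →
    ∃ F : Finset L, (∀ c ∈ F, CoprimeElt c) ∧
      (∀ c ∈ F, ∀ d ∈ F, c ≠ d → c ⊓ d = ⊥) ∧ a ⊓ b = F.sup id)

/-- A point of a bounded lattice: a lattice homomorphism into the two-element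
bounded lattice `Bool` preserving `0`, `1`, binary meets and binary joins. -/
def IsPoint (p : L → Bool) : Prop :=
  p ⊥ = false ∧ p ⊤ = true ∧
  (∀ x y : L, p (x ⊓ y) = (p x && p y)) ∧
  (∀ x y : L, p (x ⊔ y) = (p x || p y))

end FDD

/-- The poset of points of a bounded lattice, with the pointwise order. -/
def Pt (L : Type*) [Lattice L] [BoundedOrder L] : Type _ :=
  {p : L → Bool // IsPoint p}

noncomputable instance (L : Type*) [Lattice L] [BoundedOrder L] : PartialOrder (Pt L) :=
  inferInstanceAs (PartialOrder {p : L → Bool // IsPoint p})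

/-- `γ_a : L → {0,1}`, `γ_a x = 1` iff `a ≤ x`. -/
noncomputable def gammaPt {L : Type*} [Lattice L] [BoundedOrder L] (a : L) : L → Bool :=
  fun x => @decide (a ≤ x) (Classical.propDecidable _)

/-- A bounded lattice homomorphism. -/
def IsBLH {L M : Type*} [Lattice L] [BoundedOrder L] [Lattice M] [BoundedOrder M]
    (f : L → M) : Prop :=
  f ⊥ = ⊥ ∧ f ⊤ = ⊤ ∧ (∀ x y, f (x ⊓ y) = f x ⊓ f y) ∧ (∀ x y, f (x ⊔ y) = f x ⊔ f y)

/-!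
Each co-prime `a` gives a point `γ_a = (a ≤ ·)`, and `η(a)` is the principal filter `↑γ_a`, which
is compact open. Since every `x` is a finite join `⋁ F` of co-primes, `η(x) = ⋃_{a ∈ F} ↑γ_a` is
compact open, and `γ_a ∈ η(x) ↔ a ≤ x` makes `η` an order embedding. Conversely every point `p` is
the directed supremum of the `γ_a` with `p a = 1`, so a Scott-open `U` is the union of the `η(a)`
with `γ_a ∈ U`; if `U` is also compact, finitely many of them suffice and `U = η(⋁ a)`.
-/

section ScottCompact

variable {P : Type*} [PartialOrder P]

lemma scottCompactSet_Ici (k : P) : ScottCompactSet (Set.Ici k) := by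
  intro C hC hcov
  obtain ⟨V, hVC, hkV⟩ := hcov (Set.mem_Ici.2 le_rfl)
  refine ⟨{V}, by simpa using hVC, fun q hq => ⟨V, by simp, (hC V hVC).1 hq hkV⟩⟩

lemma ScottCompactSet.union {K K' : Set P} (hK : ScottCompactSet K)
    (hK' : ScottCompactSet K') : ScottCompactSet (K ∪ K') := by
  classical
  intro C hC hcov
  obtain ⟨F, hFC, hF⟩ := hK C hC (Set.subset_union_left.trans hcov)
  obtain ⟨F', hF'C, hF'⟩ := hK' C hC (Set.subset_union_right.trans hcov)
  refine ⟨F ∪ F', by simpa using And.intro hFC hF'C, Set.union_subset ?_ ?_⟩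
  · exact hF.trans (Set.sUnion_mono (by simp))
  · exact hF'.trans (Set.sUnion_mono (by simp))

lemma ScottCompactSet.biUnion_finset {ι : Type*} {s : Finset ι} {f : ι → Set P}
    (hf : ∀ i ∈ s, ScottCompactSet (f i)) : ScottCompactSet (⋃ i ∈ s, f i) := by
  classical
  induction s using Finset.induction with
  | empty => exact fun _ _ _ => ⟨∅, by simp, by simp⟩
  | insert i s _ ih =>
    rw [Finset.set_biUnion_insert]
    exact (hf i (s.mem_insert_self i)).union (ih fun j hj => hf j (Finset.mem_insert_of_mem hj))

lemma ScottCompactSet.exists_finset_subset_iUnion {K : Set P} (hK : ScottCompactSet K)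
    {ι : Type*} {f : ι → Set P} (hf : ∀ i, ScottOpen (f i)) (hcov : K ⊆ ⋃ i, f i) :
    ∃ t : Finset ι, K ⊆ ⋃ i ∈ t, f i := by
  classical
  obtain ⟨F, hFf, hF⟩ :=
    hK (Set.range f) (Set.forall_mem_range.2 hf) (by rwa [Set.sUnion_range])
  obtain ⟨t, -, rfl⟩ := Finset.subset_set_image_iff.1 (Set.image_univ (f := f) ▸ hFf)
  exact ⟨t, by simpa [Set.sUnion_image] using hF⟩

end ScottCompact

section Points

variable {L : Type*} [Lattice L] [BoundedOrder L]

lemma IsPoint.eq_true_of_le {p : L → Bool} (hp : IsPoint p) {x y : L} (hxy : x ≤ y)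
    (hx : p x = true) : p y = true := by
  simpa [inf_eq_left.2 hxy, hx] using (hp.2.2.1 x y).symm

lemma IsPoint.finsetSup_eq_true_iff {p : L → Bool} (hp : IsPoint p) {ι : Type*} (s : Finset ι)
    (f : ι → L) : p (s.sup f) = true ↔ ∃ i ∈ s, p (f i) = true := by
  classical
  induction s using Finset.induction with
  | empty => simp [hp.1]
  | insert i s _ ih => simp [hp.2.2.2, ih]

lemma gammaPt_eq_true_iff {a x : L} : gammaPt a x = true ↔ a ≤ x := by
  simp [gammaPt]

lemma CoprimeElt.isPoint_gammaPt {a : L} (ha : CoprimeElt a) : IsPoint (gammaPt a) := by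
  refine ⟨?_, ?_, fun x y => Bool.eq_iff_iff.2 ?_, fun x y => Bool.eq_iff_iff.2 ?_⟩ <;>
    simp only [← Bool.not_eq_true, gammaPt_eq_true_iff, Bool.and_eq_true, Bool.or_eq_true,
      le_bot_iff, le_top, le_inf_iff]
  · exact ha.1
  · exact ⟨ha.2 x y, Or.rec le_sup_of_le_left le_sup_of_le_right⟩

namespace Pt

lemma le_iff {p q : Pt L} : p ≤ q ↔ ∀ x, p.1 x = true → q.1 x = true :=
  forall_congr' fun _ => Bool.le_iff_imp

/-- The paper's `η_L(x)`. -/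
def basicOpen (x : L) : Set (Pt L) := {p | p.1 x = true}

lemma basicOpen_mono {x y : L} (hxy : x ≤ y) : basicOpen x ⊆ basicOpen y :=
  fun p => p.2.eq_true_of_le hxy

lemma basicOpen_finsetSup {ι : Type*} (s : Finset ι) (f : ι → L) :
    basicOpen (s.sup f) = ⋃ i ∈ s, basicOpen (f i) := by
  ext p
  simp [basicOpen, p.2.finsetSup_eq_true_iff]

noncomputable def gamma (a : L) (ha : CoprimeElt a) : Pt L := ⟨gammaPt a, ha.isPoint_gammaPt⟩

lemma gamma_mem_basicOpen_iff {a : L} (ha : CoprimeElt a) {x : L} :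
    gamma a ha ∈ basicOpen x ↔ a ≤ x :=
  gammaPt_eq_true_iff

lemma gamma_le_iff {a : L} (ha : CoprimeElt a) {p : Pt L} : gamma a ha ≤ p ↔ p.1 a = true := by
  refine ⟨fun hp => le_iff.1 hp a ?_, fun hp => le_iff.2 fun x hx => p.2.eq_true_of_le ?_ hp⟩
  · exact (gamma_mem_basicOpen_iff ha).2 le_rfl
  · exact (gamma_mem_basicOpen_iff ha).1 hx

lemma basicOpen_eq_Ici_gamma {a : L} (ha : CoprimeElt a) :
    basicOpen a = Set.Ici (gamma a ha) :=
  Set.ext fun _ => (gamma_le_iff ha).symm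

noncomputable def pointwiseSup (D : Set (Pt L)) : L → Bool :=
  fun z => @decide (∃ p ∈ D, p.1 z = true) (Classical.propDecidable _)

lemma pointwiseSup_eq_true_iff {D : Set (Pt L)} {z : L} :
    pointwiseSup D z = true ↔ ∃ p ∈ D, p.1 z = true := by
  simp [pointwiseSup]

lemma isPoint_pointwiseSup {D : Set (Pt L)} (hne : D.Nonempty) (hD : DirectedOn (· ≤ ·) D) :
    IsPoint (pointwiseSup D) := by
  refine ⟨?_, ?_, fun x y => Bool.eq_iff_iff.2 ?_, fun x y => Bool.eq_iff_iff.2 ?_⟩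
  · simp [pointwiseSup, fun p : Pt L => p.2.1]
  · obtain ⟨p, hp⟩ := hne
    exact pointwiseSup_eq_true_iff.2 ⟨p, hp, p.2.2.1⟩
  · simp only [pointwiseSup_eq_true_iff, Bool.and_eq_true, fun p : Pt L => p.2.2.2.1 x y]
    refine ⟨fun ⟨p, hp, hx, hy⟩ => ⟨⟨p, hp, hx⟩, p, hp, hy⟩, ?_⟩
    rintro ⟨⟨p, hp, hx⟩, q, hq, hy⟩
    obtain ⟨r, hr, hpr, hqr⟩ := hD p hp q hq
    exact ⟨r, hr, le_iff.1 hpr x hx, le_iff.1 hqr y hy⟩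
  · simp only [pointwiseSup_eq_true_iff, Bool.or_eq_true, fun p : Pt L => p.2.2.2.2 x y]
    grind

lemma apply_eq_true_iff_of_isLUB {D : Set (Pt L)} (hne : D.Nonempty) (hD : DirectedOn (· ≤ ·) D)
    {s : Pt L} (hs : IsLUB D s) (x : L) : s.1 x = true ↔ ∃ p ∈ D, p.1 x = true := by
  refine ⟨fun hsx => ?_, fun ⟨p, hp, hpx⟩ => le_iff.1 (hs.1 hp) x hpx⟩
  have hsup : (⟨pointwiseSup D, isPoint_pointwiseSup hne hD⟩ : Pt L) ∈ upperBounds D :=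
    fun p hp => le_iff.2 fun z hz => pointwiseSup_eq_true_iff.2 ⟨p, hp, hz⟩
  exact pointwiseSup_eq_true_iff.1 (le_iff.1 (hs.2 hsup) x hsx)

lemma scottOpen_basicOpen (x : L) : ScottOpen (basicOpen x : Set (Pt L)) :=
  ⟨fun _ _ hpq hp => le_iff.1 hpq x hp,
    fun _ hne hD _ hs hsx => (apply_eq_true_iff_of_isLUB hne hD hs x).1 hsx⟩

end Pt

end Points

def CoprimeGenerated (L : Type*) [Lattice L] [BoundedOrder L] : Prop :=
  ∀ x : L, ∃ F : Finset L, (∀ a ∈ F, CoprimeElt a) ∧ x = F.sup id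

lemma IsFDD.coprimeGenerated {L : Type*} [DistribLattice L] [BoundedOrder L] (hL : IsFDD L) :
    CoprimeGenerated L :=
  hL.1

namespace Pt

variable {L : Type*} [Lattice L] [BoundedOrder L]

lemma scottCompactSet_basicOpen (hL : CoprimeGenerated L) (x : L) :
    ScottCompactSet (basicOpen x : Set (Pt L)) := by
  obtain ⟨F, hF, rfl⟩ := hL x
  rw [basicOpen_finsetSup]
  exact ScottCompactSet.biUnion_finset fun a ha =>
    basicOpen_eq_Ici_gamma (hF a ha) ▸ scottCompactSet_Ici _

lemma basicOpen_subset_basicOpen_iff (hL : CoprimeGenerated L) {x y : L} :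
    basicOpen x ⊆ basicOpen y ↔ x ≤ y := by
  refine ⟨fun hxy => ?_, basicOpen_mono⟩
  obtain ⟨F, hF, rfl⟩ := hL x
  refine Finset.sup_le fun a ha => (gamma_mem_basicOpen_iff (hF a ha)).1 (hxy ?_)
  exact (gamma_mem_basicOpen_iff (hF a ha)).2 (Finset.le_sup (f := id) ha)

def gammasBelow (p : Pt L) : Set (Pt L) :=
  {q | ∃ a, ∃ ha : CoprimeElt a, p.1 a = true ∧ q = gamma a ha}

lemma exists_gamma_mem_gammasBelow (hL : CoprimeGenerated L) {p : Pt L} {x : L}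
    (hpx : p.1 x = true) :
    ∃ a, ∃ ha : CoprimeElt a, a ≤ x ∧ gamma a ha ∈ gammasBelow p := by
  obtain ⟨F, hF, rfl⟩ := hL x
  obtain ⟨a, ha, hpa⟩ := (p.2.finsetSup_eq_true_iff F id).1 hpx
  exact ⟨a, hF a ha, Finset.le_sup (f := id) ha, a, hF a ha, hpa, rfl⟩

lemma gammasBelow_nonempty (hL : CoprimeGenerated L) (p : Pt L) : (gammasBelow p).Nonempty :=
  let ⟨_, _, _, hmem⟩ := exists_gamma_mem_gammasBelow hL p.2.2.1
  ⟨_, hmem⟩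

lemma directedOn_gammasBelow (hL : CoprimeGenerated L) (p : Pt L) :
    DirectedOn (· ≤ ·) (gammasBelow p) := by
  rintro _ ⟨a, ha, hpa, rfl⟩ _ ⟨b, hb, hpb, rfl⟩
  have hpab : p.1 (a ⊓ b) = true := by simp [p.2.2.2.1, hpa, hpb]
  obtain ⟨c, hc, hcab, hmem⟩ := exists_gamma_mem_gammasBelow hL hpab
  refine ⟨gamma c hc, hmem, (gamma_le_iff ha).2 ?_, (gamma_le_iff hb).2 ?_⟩
  · exact (gamma_mem_basicOpen_iff hc).2 (hcab.trans inf_le_left)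
  · exact (gamma_mem_basicOpen_iff hc).2 (hcab.trans inf_le_right)

lemma isLUB_gammasBelow (hL : CoprimeGenerated L) (p : Pt L) : IsLUB (gammasBelow p) p := by
  refine ⟨?_, fun u hu => le_iff.2 fun x hpx => ?_⟩
  · rintro _ ⟨a, ha, hpa, rfl⟩
    exact (gamma_le_iff ha).2 hpa
  · obtain ⟨a, ha, hax, hmem⟩ := exists_gamma_mem_gammasBelow hL hpx
    exact le_iff.1 (hu hmem) x ((gamma_mem_basicOpen_iff ha).2 hax)

lemma exists_mem_basicOpen_subset (hL : CoprimeGenerated L) {U : Set (Pt L)} (hU : ScottOpen U)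
    {p : Pt L} (hp : p ∈ U) :
    ∃ a, CoprimeElt a ∧ p ∈ basicOpen a ∧ basicOpen a ⊆ U := by
  obtain ⟨_, ⟨a, ha, hpa, rfl⟩, haU⟩ :=
    hU.2 _ (gammasBelow_nonempty hL p) (directedOn_gammasBelow hL p) p (isLUB_gammasBelow hL p) hp
  exact ⟨a, ha, hpa, basicOpen_eq_Ici_gamma ha ▸ hU.1.Ici_subset haU⟩

lemma exists_basicOpen_eq (hL : CoprimeGenerated L) {U : Set (Pt L)} (hU : U ∈ CO (Pt L)) :
    ∃ x : L, basicOpen x = U := by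
  let S := {a : L | CoprimeElt a ∧ basicOpen a ⊆ U}
  have hcov : U ⊆ ⋃ a : S, basicOpen a.1 := fun p hp =>
    let ⟨a, ha, hpa, haU⟩ := exists_mem_basicOpen_subset hL hU.1 hp
    Set.mem_iUnion.2 ⟨⟨a, ha, haU⟩, hpa⟩
  obtain ⟨t, ht⟩ := hU.2.exists_finset_subset_iUnion (fun a : S => scottOpen_basicOpen a.1) hcov
  refine ⟨t.sup Subtype.val, (basicOpen_finsetSup t _).trans (subset_antisymm ?_ ht)⟩
  exact Set.iUnion₂_subset fun a _ => a.2.2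

end Pt

/-- For an FDD-lattice `L`, the map `η_L : x ↦ {p ∈ Pt L : p x = 1}` is
an order isomorphism from `L` onto the lattice `CO (Pt L)` of compact-open subsets of
`Pt L` ordered by inclusion: it is well-defined, order-preserving (indeed order
reflecting), injective and surjective. -/
theorem stmt13 {L : Type*} [DistribLattice L] [BoundedOrder L] (hL : IsFDD L) :
    (∀ x : L, {p : Pt L | p.1 x = true} ∈ CO (Pt L)) ∧
    (∀ x y : L, x ≤ y ↔ {p : Pt L | p.1 x = true} ⊆ {p : Pt L | p.1 y = true}) ∧
    Function.Injective (fun x : L => {p : Pt L | p.1 x = true}) ∧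
    (∀ U ∈ CO (Pt L), ∃ x : L, {p : Pt L | p.1 x = true} = U) := by
  have hL := hL.coprimeGenerated
  have hiff (x y : L) : x ≤ y ↔ Pt.basicOpen x ⊆ Pt.basicOpen y :=
    (Pt.basicOpen_subset_basicOpen_iff hL).symm
  refine ⟨fun x => ⟨Pt.scottOpen_basicOpen x, Pt.scottCompactSet_basicOpen hL x⟩, hiff,
    fun x y hxy => ?_, fun U hU => Pt.exists_basicOpen_eq hL hU⟩
  exact le_antisymm ((hiff x y).2 hxy.le) ((hiff y x).2 hxy.ge)
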